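/- arXiv:2405.05971 — 15 statements merged into one kernel-verified Lean document; each statement's English description precedes it below -/
import Mathlib

section
/- A proper submodule P of an A-module M is classical prime if and only if P is both classical 1-absorbing prime and semiprime. -/
/-- A proper submodule is classical 1-absorbing prime. -/
def IsCl1AbsPrime {A M : Type*} [CommRing A] [AddCommGroup M] [Module A M]
    (P : Submodule A M) : Prop :=
  P ≠ ⊤ ∧ ∀ (a b c : A) (m : M), ¬IsUnit a → ¬IsUnit b → ¬IsUnit c →
    (a * b * c) • m ∈ P → (a * b) • m ∈ P ∨ c • m ∈ P


/-- A proper submodule is classical prime. -/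
def IsClPrime {A M : Type*} [CommRing A] [AddCommGroup M] [Module A M]
    (P : Submodule A M) : Prop :=
  P ≠ ⊤ ∧ ∀ (a b : A) (m : M), (a * b) • m ∈ P → a • m ∈ P ∨ b • m ∈ P

theorem stmt_2 {A M : Type*} [CommRing A] [AddCommGroup M] [Module A M]
    (P : Submodule A M) (hP : P ≠ ⊤) :
    IsClPrime P ↔
      (IsCl1AbsPrime P ∧ ∀ (a : A) (m : M), (a * a) • m ∈ P → a • m ∈ P) := by
  constructor
  · rintro ⟨_, h⟩
    refine ⟨⟨hP, fun a b c m _ _ _ habc => h (a * b) c m habc⟩, fun a m h2 => ?_⟩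
    rcases h a a m h2 with h' | h' <;> exact h'
  · rintro ⟨⟨_, h1⟩, h2⟩
    refine ⟨hP, fun a b m hab => ?_⟩
    by_cases ha : IsUnit a
    · right
      obtain ⟨u, rfl⟩ := ha
      have h3 := P.smul_mem (↑u⁻¹ : A) hab
      rwa [smul_smul, ← mul_assoc, Units.inv_mul, one_mul] at h3
    by_cases hb : IsUnit b
    · left
      obtain ⟨u, rfl⟩ := hb
      have h3 := P.smul_mem (↑u⁻¹ : A) hab
      rwa [smul_smul, mul_comm a (↑u : A), ← mul_assoc, Units.inv_mul, one_mul] at h3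
    · have h3 : (b * b * a) • m ∈ P := by
        have h4 := P.smul_mem b hab
        rwa [smul_smul, show b * (a * b) = b * b * a from by ring] at h4
      rcases h1 b b a m hb hb ha h3 with h' | h'
      · right; exact h2 b m h'
      · left; exact h'
end

section
/- Let f : M₁ → M₂ be an A-module homomorphism and P₂ a classical 1-absorbing prime submodule of M₂. Then either f⁻¹(P₂) = M₁ or f⁻¹(P₂) is a classical 1-absorbing prime submodule of M₁. -/
theorem stmt_3 {A M₁ M₂ : Type*} [CommRing A] [AddCommGroup M₁] [Module A M₁]
    [AddCommGroup M₂] [Module A M₂] (f : M₁ →ₗ[A] M₂) (P₂ : Submodule A M₂)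
    (h : IsCl1AbsPrime P₂) :
    P₂.comap f = ⊤ ∨ IsCl1AbsPrime (P₂.comap f) := by
  by_cases htop : P₂.comap f = ⊤
  · exact Or.inl htop
  · refine Or.inr ⟨htop, fun a b c m ha hb hc hm => ?_⟩
    simp only [Submodule.mem_comap, map_smul] at hm ⊢
    exact h.2 a b c (f m) ha hb hc hm
end

section
/- Let f : M₁ → M₂ be a surjective A-module homomorphism and P₁ a classical 1-absorbing prime submodule of M₁ containing ker(f). Then f(P₁) is a classical 1-absorbing prime submodule of M₂. -/
theorem stmt_4 {A M₁ M₂ : Type*} [CommRing A] [AddCommGroup M₁] [Module A M₁]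
    [AddCommGroup M₂] [Module A M₂] (f : M₁ →ₗ[A] M₂)
    (hf : Function.Surjective f) (P₁ : Submodule A M₁)
    (hker : LinearMap.ker f ≤ P₁) (h : IsCl1AbsPrime P₁) :
    IsCl1AbsPrime (P₁.map f) := by
  obtain ⟨hne, habs⟩ := h
  have hcomap : Submodule.comap f (P₁.map f) = P₁ := by
    rw [Submodule.comap_map_eq, sup_eq_left.mpr hker]
  constructor
  · intro htop
    apply hne
    rw [← hcomap, htop, Submodule.comap_top]
  · intro a b c m ha hb hc hmem
    obtain ⟨m₁, rfl⟩ := hf m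
    have : (a * b * c) • m₁ ∈ P₁ := by
      rw [← hcomap]
      simpa [Submodule.mem_comap, map_smul] using hmem
    rcases habs a b c m₁ ha hb hc this with H | H
    · left
      rw [← map_smul]
      exact Submodule.mem_map_of_mem H
    · right
      rw [← map_smul]
      exact Submodule.mem_map_of_mem H
end

section
/- Let L ⊆ P be submodules of an A-module M. Then P is a classical 1-absorbing prime submodule of M if and only if P/L is a classical 1-absorbing prime submodule of M/L. -/
theorem stmt_5 {A M : Type*} [CommRing A] [AddCommGroup M] [Module A M]
    (L P : Submodule A M) (hLP : L ≤ P) :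
    IsCl1AbsPrime P ↔ IsCl1AbsPrime (P.map L.mkQ) := by
  have hmem : ∀ m : M, L.mkQ m ∈ P.map L.mkQ ↔ m ∈ P := by
    intro m
    constructor
    · rintro ⟨y, hy, hxy⟩
      have : m - y ∈ L := by
        rw [← Submodule.Quotient.eq]
        exact (Submodule.Quotient.eq L).mpr ((Submodule.Quotient.eq L).mp
          (by simpa [Submodule.mkQ_apply] using hxy.symm))
      have h2 : m - y ∈ P := hLP this
      simpa using P.add_mem h2 hy
    · intro hm
      exact ⟨m, hm, rfl⟩
  constructor
  · rintro ⟨hne, h⟩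
    refine ⟨?_, ?_⟩
    · intro htop
      apply hne
      rw [Submodule.eq_top_iff']
      intro m
      exact (hmem m).mp (htop ▸ Submodule.mem_top)
    · intro a b c m' ha hb hc hmem'
      obtain ⟨m, rfl⟩ := L.mkQ_surjective m'
      rw [← map_smul] at hmem'
      rcases h a b c m ha hb hc ((hmem _).mp hmem') with h1 | h1
      · left; rw [← map_smul]; exact (hmem _).mpr h1
      · right; rw [← map_smul]; exact (hmem _).mpr h1
  · rintro ⟨hne, h⟩
    refine ⟨?_, ?_⟩
    · rintro rfl
      apply hne
      rw [Submodule.eq_top_iff']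
      intro x
      obtain ⟨m, rfl⟩ := L.mkQ_surjective x
      exact ⟨m, trivial, rfl⟩
    · intro a b c m ha hb hc hm
      have := h a b c (L.mkQ m) ha hb hc (by rw [← map_smul]; exact (hmem _).mpr hm)
      rcases this with h1 | h1
      · left; exact (hmem _).mp (by rwa [map_smul])
      · right; exact (hmem _).mp (by rwa [map_smul])
end

section
/- A proper submodule P of an A-module M is classical 1-absorbing prime if and only if for all nonunits a,b,c ∈ A, (P :_M abc) = (P :_M ab) ∪ (P :_M c). -/
theorem stmt_6 {A M : Type*} [CommRing A] [AddCommGroup M] [Module A M]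
    (P : Submodule A M) (hP : P ≠ ⊤) :
    IsCl1AbsPrime P ↔
      ∀ a b c : A, ¬IsUnit a → ¬IsUnit b → ¬IsUnit c →
        {m : M | (a * b * c) • m ∈ P} =
          {m : M | (a * b) • m ∈ P} ∪ {m : M | c • m ∈ P} := by
  constructor
  · rintro ⟨-, h⟩ a b c ha hb hc
    ext m
    constructor
    · exact fun hm => h a b c m ha hb hc hm
    · rintro (hm | hm)
      · show (a * b * c) • m ∈ P
        rw [mul_comm (a*b) c, mul_smul]
        exact P.smul_mem c hm
      · show (a * b * c) • m ∈ P
        rw [mul_smul]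
        exact P.smul_mem _ hm
  · intro h
    refine ⟨hP, fun a b c m ha hb hc hm => ?_⟩
    have := h a b c ha hb hc
    have hm' : m ∈ {m : M | (a * b) • m ∈ P} ∪ {m : M | c • m ∈ P} := this ▸ hm
    exact hm'
end

section
/- A proper submodule P of an A-module M is classical 1-absorbing prime if and only if for all nonunits a,b ∈ A and m ∈ M with abm ∉ P, (P :_A abm) = (P :_A m). -/
theorem stmt_7 {A M : Type*} [CommRing A] [AddCommGroup M] [Module A M]
    (P : Submodule A M) (hP : P ≠ ⊤) :
    IsCl1AbsPrime P ↔
      ∀ (a b : A) (m : M), ¬IsUnit a → ¬IsUnit b → (a * b) • m ∉ P →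
        {x : A | x • ((a * b) • m) ∈ P} = {x : A | x • m ∈ P} := by
  constructor
  · rintro ⟨-, h⟩ a b m ha hb hab
    ext x
    simp only [Set.mem_setOf_eq]
    constructor
    · intro hx
      by_cases hu : IsUnit x
      · have := P.smul_mem (↑hu.unit⁻¹ : A) hx
        rw [smul_smul, ← mul_smul, ← mul_assoc] at this
        exact absurd (by simpa [hu.unit_spec] using this) hab
      · rcases h a b x m ha hb hu (by rw [mul_comm, mul_smul]; exact hx) with h1 | h2
        · exact absurd h1 hab
        · exact h2
    · intro hx
      rw [smul_comm]
      exact P.smul_mem _ hx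
  · intro h
    refine ⟨hP, fun a b c m ha hb hc habc => ?_⟩
    by_cases hab : (a * b) • m ∈ P
    · exact Or.inl hab
    · right
      have := h a b m ha hb hab
      have hc' : c ∈ {x : A | x • ((a * b) • m) ∈ P} := by
        simp only [Set.mem_setOf_eq, smul_smul]
        rwa [mul_comm c (a * b)]
      rw [this] at hc'
      exact hc'
end

section
/- A proper submodule P of an A-module M is classical 1-absorbing prime if and only if for every m ∈ M \ P, the ideal (P :_A m) is a 1-absorbing prime ideal of A. -/
/-- A proper ideal is 1-absorbing prime. -/
def Is1AbsPrimeIdeal {A : Type*} [CommRing A] (I : Ideal A) : Prop :=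
  I ≠ ⊤ ∧ ∀ a b c : A, ¬IsUnit a → ¬IsUnit b → ¬IsUnit c →
    a * b * c ∈ I → a * b ∈ I ∨ c ∈ I

namespace Submodule

variable {A M : Type*} [CommRing A] [AddCommGroup M] [Module A M] {P : Submodule A M} {m : M}

lemma colon_span_singleton_ne_top (hm : m ∉ P) : P.colon (span A {m}) ≠ ⊤ := by
  rwa [Ne, colon_eq_top_iff_subset, SetLike.coe_subset_coe, span_singleton_le_iff_mem]

lemma is1AbsPrimeIdeal_colon_span_singleton_iff (hm : m ∉ P) :
    Is1AbsPrimeIdeal (P.colon (span A {m})) ↔ ∀ a b c : A, ¬IsUnit a → ¬IsUnit b → ¬IsUnit c →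
      (a * b * c) • m ∈ P → (a * b) • m ∈ P ∨ c • m ∈ P := by
  simp only [Is1AbsPrimeIdeal, mem_colon_span_singleton, colon_span_singleton_ne_top hm, ne_eq,
    not_false_eq_true, true_and]

end Submodule

theorem stmt_8 {A M : Type*} [CommRing A] [AddCommGroup M] [Module A M]
    (P : Submodule A M) (hP : P ≠ ⊤) :
    IsCl1AbsPrime P ↔
      ∀ m : M, m ∉ P → Is1AbsPrimeIdeal (P.colon (Submodule.span A {m})) := by
  rw [IsCl1AbsPrime, and_iff_right hP]
  refine ⟨fun h m hm ↦ (Submodule.is1AbsPrimeIdeal_colon_span_singleton_iff hm).2 (h · · · m),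
    fun h a b c m ha hb hc habc ↦ ?_⟩
  by_cases hm : m ∈ P
  · exact Or.inl (P.smul_mem _ hm)
  · exact (Submodule.is1AbsPrimeIdeal_colon_span_singleton_iff hm).1 (h m hm) a b c ha hb hc habc
end

section
/- A proper submodule P of an A-module M is classical 1-absorbing prime if and only if for all proper ideals I, J, K of A and every m ∈ M, IJKm ⊆ P implies IJm ⊆ P or Km ⊆ P. -/
theorem stmt_9 {A M : Type*} [CommRing A] [AddCommGroup M] [Module A M]
    (P : Submodule A M) (hP : P ≠ ⊤) :
    IsCl1AbsPrime P ↔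
      ∀ (I J K : Ideal A) (m : M), I ≠ ⊤ → J ≠ ⊤ → K ≠ ⊤ →
        (∀ i ∈ I, ∀ j ∈ J, ∀ k ∈ K, (i * j * k) • m ∈ P) →
        (∀ i ∈ I, ∀ j ∈ J, (i * j) • m ∈ P) ∨ (∀ k ∈ K, k • m ∈ P) := by
  constructor
  · rintro ⟨-, h⟩ I J K m hI hJ hK habc
    by_cases hIJ : ∀ i ∈ I, ∀ j ∈ J, (i * j) • m ∈ P
    · exact Or.inl hIJ
    · push_neg at hIJ
      obtain ⟨i, hi, j, hj, hij⟩ := hIJ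
      refine Or.inr fun k hk => ?_
      have hni : ¬IsUnit i := fun hu => hI (Ideal.eq_top_of_isUnit_mem _ hi hu)
      have hnj : ¬IsUnit j := fun hu => hJ (Ideal.eq_top_of_isUnit_mem _ hj hu)
      have hnk : ¬IsUnit k := fun hu => hK (Ideal.eq_top_of_isUnit_mem _ hk hu)
      exact (h i j k m hni hnj hnk (habc i hi j hj k hk)).resolve_left hij
  · intro h
    refine ⟨hP, fun a b c m ha hb hc habc => ?_⟩
    have hIa : Ideal.span {a} ≠ ⊤ := by
      rw [Ne, Ideal.span_singleton_eq_top]; exact ha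
    have hIb : Ideal.span {b} ≠ ⊤ := by
      rw [Ne, Ideal.span_singleton_eq_top]; exact hb
    have hIc : Ideal.span {c} ≠ ⊤ := by
      rw [Ne, Ideal.span_singleton_eq_top]; exact hc
    have key : ∀ i ∈ Ideal.span {a}, ∀ j ∈ Ideal.span {b}, ∀ k ∈ Ideal.span {c},
        (i * j * k) • m ∈ P := by
      intro i hi j hj k hk
      obtain ⟨x, rfl⟩ := Ideal.mem_span_singleton'.mp hi
      obtain ⟨y, rfl⟩ := Ideal.mem_span_singleton'.mp hj
      obtain ⟨z, rfl⟩ := Ideal.mem_span_singleton'.mp hk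
      have : (x * a * (y * b) * (z * c)) • m = (x * y * z) • (a * b * c) • m := by
        rw [← mul_smul]; ring_nf
      rw [this]
      exact P.smul_mem _ habc
    rcases h _ _ _ m hIa hIb hIc key with h1 | h2
    · exact Or.inl (h1 a (Ideal.mem_span_singleton_self a) b (Ideal.mem_span_singleton_self b))
    · exact Or.inr (h2 c (Ideal.mem_span_singleton_self c))
end

section
/- A proper ideal I of a commutative ring A is a classical 1-absorbing prime submodule of A viewed as a module over itself if and only if I is a 1-absorbing prime ideal of A. -/
theorem stmt_10 {A : Type*} [CommRing A] (I : Ideal A) (hI : I ≠ ⊤) :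
    IsCl1AbsPrime I ↔ Is1AbsPrimeIdeal I := by
  constructor
  · rintro ⟨hP, h⟩
    refine ⟨hI, fun a b c ha hb hc habc => ?_⟩
    have := h a b c 1 ha hb hc (by simpa [smul_eq_mul] using habc)
    simpa [smul_eq_mul] using this
  · rintro ⟨_, h⟩
    refine ⟨hI, fun a b c m ha hb hc habc => ?_⟩
    simp only [smul_eq_mul] at habc ⊢
    by_cases hcm : IsUnit (c * m)
    · left
      obtain ⟨u, hu⟩ := hcm
      have : a * b * c * m = a * b * u := by rw [hu]; ring
      have hab : a * b ∈ I := by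
        have := I.mul_mem_right (↑u⁻¹) (this ▸ habc)
        simpa [mul_assoc] using this
      exact I.mul_mem_right m hab
    · have := h a b (c * m) ha hb hcm (by rwa [← mul_assoc])
      rcases this with h1 | h1
      · exact Or.inl (I.mul_mem_right m h1)
      · exact Or.inr h1
end

section
/- The intersection of a descending chain (i.e., a nonempty chain under inclusion) of classical 1-absorbing prime submodules of an A-module M is a classical 1-absorbing prime submodule of M. -/
theorem stmt_12 {A M : Type*} [CommRing A] [AddCommGroup M] [Module A M]
    (C : Set (Submodule A M)) (hne : C.Nonempty) (hchain : IsChain (· ≤ ·) C)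
    (h : ∀ P ∈ C, IsCl1AbsPrime P) :
    IsCl1AbsPrime (sInf C) := by
  obtain ⟨P0, hP0⟩ := hne
  constructor
  · intro htop
    exact (h P0 hP0).1 (top_le_iff.mp (htop ▸ sInf_le hP0))
  · intro a b c m ha hb hc hmem
    by_contra hcon
    push_neg at hcon
    obtain ⟨h1, h2⟩ := hcon
    rw [Submodule.mem_sInf] at h1 h2 hmem
    push_neg at h1 h2
    obtain ⟨P, hP, hPab⟩ := h1
    obtain ⟨Q, hQ, hQc⟩ := h2
    rcases eq_or_ne P Q with rfl | hne
    · rcases (h P hP).2 a b c m ha hb hc (hmem P hP) with h' | h'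
      · exact hPab h'
      · exact hQc h'
    · rcases hchain hP hQ hne with hle | hle
      · rcases (h P hP).2 a b c m ha hb hc (hmem P hP) with h' | h'
        · exact hPab h'
        · exact hQc (hle h')
      · rcases (h Q hQ).2 a b c m ha hb hc (hmem Q hQ) with h' | h'
        · exact hPab (hle h')
        · exact hQc h'
end

section
/- A proper submodule P of an A-module M is classical 1-absorbing prime if and only if for all nonunits a,b,c ∈ A, either (P :_M abc) = (P :_M ab) or (P :_M abc) = (P :_M c). -/
theorem stmt_13 {A M : Type*} [CommRing A] [AddCommGroup M] [Module A M]
    (P : Submodule A M) (hP : P ≠ ⊤) :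
    IsCl1AbsPrime P ↔
      ∀ a b c : A, ¬IsUnit a → ¬IsUnit b → ¬IsUnit c →
        {m : M | (a * b * c) • m ∈ P} = {m : M | (a * b) • m ∈ P} ∨
        {m : M | (a * b * c) • m ∈ P} = {m : M | c • m ∈ P} := by
  constructor
  · rintro ⟨-, h⟩ a b c ha hb hc
    -- inclusions
    have hS1 : ∀ m : M, (a * b) • m ∈ P → (a * b * c) • m ∈ P := by
      intro m hm
      have : (a * b * c) • m = c • ((a * b) • m) := by
        rw [smul_smul, mul_comm]
      rw [this]; exact P.smul_mem c hm
    have hS2 : ∀ m : M, c • m ∈ P → (a * b * c) • m ∈ P := by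
      intro m hm
      have : (a * b * c) • m = (a * b) • (c • m) := by
        rw [smul_smul]
      rw [this]; exact P.smul_mem _ hm
    by_cases h1 : {m : M | (a * b * c) • m ∈ P} ⊆ {m : M | (a * b) • m ∈ P}
    · left; exact Set.Subset.antisymm h1 (fun m hm => hS1 m hm)
    · right
      apply Set.Subset.antisymm _ (fun m hm => hS2 m hm)
      intro y hy
      obtain ⟨x, hx, hx1⟩ := Set.not_subset.mp h1
      -- x ∈ S, x ∉ S1, hence x ∈ S2
      have hx2 : c • x ∈ P := (h a b c x ha hb hc hx).resolve_left hx1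
      by_cases hy2 : c • y ∈ P
      · exact hy2
      · have hy1 : (a * b) • y ∈ P := (h a b c y ha hb hc hy).resolve_right hy2
        -- consider x + y
        have hxy : (a * b * c) • (x + y) ∈ P := by
          rw [smul_add]; exact P.add_mem hx (hS1 y hy1)
        rcases h a b c (x + y) ha hb hc hxy with hxy1 | hxy2
        · exfalso; apply hx1
          have : (a * b) • x = (a * b) • (x + y) - (a * b) • y := by
            rw [smul_add]; abel
          show (a * b) • x ∈ P
          rw [this]; exact P.sub_mem hxy1 hy1
        · exfalso; apply hy2
          have : c • y = c • (x + y) - c • x := by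
            rw [smul_add]; abel
          rw [this]; exact P.sub_mem hxy2 hx2
  · intro h
    refine ⟨hP, fun a b c m ha hb hc hm => ?_⟩
    rcases h a b c ha hb hc with he | he
    · left; have : m ∈ {m : M | (a * b) • m ∈ P} := he ▸ hm; exact this
    · right; have : m ∈ {m : M | c • m ∈ P} := he ▸ hm; exact this
end

section
/- A proper submodule P of an A-module M is classical 1-absorbing prime if and only if for every submodule L of M not contained in P, the ideal (P :_A L) is a 1-absorbing prime ideal of A. -/
theorem stmt_14 {A M : Type*} [CommRing A] [AddCommGroup M] [Module A M]
    (P : Submodule A M) (hP : P ≠ ⊤) :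
    IsCl1AbsPrime P ↔
      ∀ L : Submodule A M, ¬L ≤ P → Is1AbsPrimeIdeal (P.colon L) := by
  constructor
  · rintro ⟨-, habs⟩ L hL
    constructor
    · intro htop
      apply hL
      intro m hm
      have h1 : (1 : A) ∈ P.colon L := htop ▸ Submodule.mem_top
      simpa using Submodule.mem_colon.mp h1 m hm
    · intro a b c ha hb hc habc
      by_contra h
      push_neg at h
      obtain ⟨hab, hcn⟩ := h
      rw [Submodule.mem_colon] at hab hcn habc
      push_neg at hab hcn
      obtain ⟨m1, hm1, hab1⟩ := hab
      obtain ⟨m2, hm2, hc2⟩ := hcn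
      have h1 := habs a b c m1 ha hb hc (habc m1 hm1)
      have h2 := habs a b c m2 ha hb hc (habc m2 hm2)
      have hc1 : c • m1 ∈ P := h1.resolve_left hab1
      have hab2 : (a * b) • m2 ∈ P := h2.resolve_right hc2
      have h3 := habs a b c (m1 + m2) ha hb hc (by
        rw [smul_add]; exact P.add_mem (habc m1 hm1) (habc m2 hm2))
      rcases h3 with h3 | h3
      · rw [smul_add] at h3
        exact hab1 (by simpa using P.sub_mem h3 hab2)
      · rw [smul_add] at h3
        exact hc2 (by simpa using P.sub_mem h3 hc1)
  · intro h
    refine ⟨hP, fun a b c m ha hb hc habc => ?_⟩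
    by_cases hm : m ∈ P
    · exact Or.inr (P.smul_mem c hm)
    · have hL : ¬(Submodule.span A {m} : Submodule A M) ≤ P := by
        intro hle
        exact hm (hle (Submodule.mem_span_singleton_self m))
      obtain ⟨-, h1⟩ := h _ hL
      have habc' : a * b * c ∈ P.colon (Submodule.span A {m}) := by
        rw [Submodule.mem_colon]
        intro p hp
        obtain ⟨r, rfl⟩ := Submodule.mem_span_singleton.mp hp
        rw [smul_comm]
        exact P.smul_mem r habc
      rcases h1 a b c ha hb hc habc' with h2 | h2
      · exact Or.inl (Submodule.mem_colon.mp h2 m (Submodule.mem_span_singleton_self m))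
      · exact Or.inr (Submodule.mem_colon.mp h2 m (Submodule.mem_span_singleton_self m))
end

section
/- If P is a classical 1-absorbing prime submodule of an A-module M, then for all nonunits a,b,c ∈ A and m ∈ M, (P :_A abcm) = (P :_A abm) ∪ (P :_A cm). -/
theorem stmt_15 {A M : Type*} [CommRing A] [AddCommGroup M] [Module A M]
    (P : Submodule A M) (h : IsCl1AbsPrime P)
    (a b c : A) (m : M) (ha : ¬IsUnit a) (hb : ¬IsUnit b) (hc : ¬IsUnit c) :
    {x : A | x • ((a * b * c) • m) ∈ P} =
      {x : A | x • ((a * b) • m) ∈ P} ∪ {x : A | x • (c • m) ∈ P} := by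
  ext x
  simp only [Set.mem_setOf_eq, Set.mem_union, smul_smul]
  constructor
  · intro hx
    by_cases hxu : IsUnit x
    · obtain ⟨u, rfl⟩ := hxu
      have h1 : (a * b * c) • m ∈ P := by
        have := P.smul_mem (↑u⁻¹ : A) hx
        rwa [smul_smul, ← mul_assoc, Units.inv_mul, one_mul] at this
      rcases h.2 a b c m ha hb hc h1 with h2 | h2
      · exact Or.inl (by rw [mul_smul]; exact P.smul_mem _ h2)
      · exact Or.inr (by rw [mul_smul]; exact P.smul_mem _ h2)
    · have h1 : (a * b * (x * c)) • m ∈ P := by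
        have e : a * b * (x * c) = x * (a * b * c) := by ring
        rw [e]; exact hx
      rcases h.2 a b (x * c) m ha hb (fun hu => hxu (isUnit_of_mul_isUnit_left hu)) h1 with h2 | h2
      · exact Or.inl (by rw [mul_smul]; exact P.smul_mem _ h2)
      · exact Or.inr h2
  · rintro (hx | hx)
    · have e : x * (a * b * c) = c * (x * (a * b)) := by ring
      rw [e, mul_smul]
      exact P.smul_mem _ hx
    · have e : x * (a * b * c) = (a * b) * (x * c) := by ring
      rw [e, mul_smul]
      exact P.smul_mem _ hx
end

section
/- If P is a classical 1-absorbing prime submodule of an A-module M which is not classical prime, then A is a local ring whose maximal ideal 𝔮 satisfies 𝔮² ⊆ (P :_A m) for some m ∈ M \ P. -/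
/-!
If `P` fails to be classical prime, there are `a b : A` and `m : M` with `abm ∈ P` but
`am, bm ∉ P`; then `a` and `b` are nonunits. Applying the 1-absorbing property first to
`c · a · b` and then to `c · d · a` shows that `cdm ∈ P` for all nonunits `c, d`. So the
product of any two nonunits lies in the proper ideal `(P :_A m)`; if `c + d` were a unit for
nonunits `c, d`, then so would be `(c + d)² ∈ (P :_A m)`. Hence the nonunits form the
maximal ideal `𝔮` of a local ring, and `𝔮² ⊆ (P :_A m)`.
-/

theorem IsLocalRing.of_mul_nonunits_mem {A : Type*} [CommRing A] {I : Ideal A} (hI : I ≠ ⊤)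
    (hmul : ∀ c d : A, ¬IsUnit c → ¬IsUnit d → c * d ∈ I) : IsLocalRing A := by
  have : Nontrivial A := not_subsingleton_iff_nontrivial.mp fun _ ↦ hI (Subsingleton.elim _ _)
  refine IsLocalRing.of_nonunits_add fun c d hc hd hcd ↦ hI (Ideal.eq_top_of_isUnit_mem I ?_
    (hcd.mul hcd))
  have hexpand : (c + d) * (c + d) = c * c + c * d + (d * c + d * d) := by ring
  rw [hexpand]
  exact I.add_mem (I.add_mem (hmul c c hc hc) (hmul c d hc hd))
    (I.add_mem (hmul d c hd hc) (hmul d d hd hd))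

section

open Submodule

variable {A M : Type*} [CommRing A] [AddCommGroup M] [Module A M] {P : Submodule A M}
  {a b : A} {m : M}

theorem Submodule.not_isUnit_of_mul_smul_mem (hab : (a * b) • m ∈ P) (hb : b • m ∉ P) :
    ¬IsUnit a :=
  fun ha ↦ hb <| (P.smul_mem_iff_of_isUnit ha).mp (by rwa [smul_smul])

theorem IsCl1AbsPrime.mul_mem_colon (h : IsCl1AbsPrime P) (hab : (a * b) • m ∈ P)
    (ha : a • m ∉ P) (hb : b • m ∉ P) {c d : A} (hc : ¬IsUnit c) (hd : ¬IsUnit d) :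
    c * d ∈ P.colon (span A {m}) := by
  have hna : ¬IsUnit a := not_isUnit_of_mul_smul_mem hab hb
  have hnb : ¬IsUnit b := not_isUnit_of_mul_smul_mem (by rwa [mul_comm]) ha
  have hda : (d * a) • m ∈ P := by
    refine (h.2 d a b m hd hna hnb ?_).resolve_right hb
    rw [mul_assoc, mul_smul]
    exact P.smul_mem d hab
  rw [mem_colon_span_singleton]
  refine (h.2 c d a m hc hd hna ?_).resolve_right ha
  rw [mul_assoc, mul_smul]
  exact P.smul_mem c hda

end

theorem stmt_18 {A M : Type*} [CommRing A] [AddCommGroup M] [Module A M]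
    (P : Submodule A M) (h : IsCl1AbsPrime P) (hnp : ¬IsClPrime P) :
    ∃ q : Ideal A, q.IsMaximal ∧ (∀ q' : Ideal A, q'.IsMaximal → q' = q) ∧
      ∃ m : M, m ∉ P ∧ q ^ 2 ≤ P.colon (Submodule.span A {m}) := by
  obtain ⟨a, b, m, hab, ha, hb⟩ : ∃ a b m, (a * b) • m ∈ P ∧ a • m ∉ P ∧ b • m ∉ P := by
    simpa [IsClPrime, h.1] using hnp
  have hm : m ∉ P := fun hm ↦ ha (P.smul_mem a hm)
  have hmul := fun c d ↦ h.mul_mem_colon hab ha hb (c := c) (d := d)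
  have hcolon : P.colon (Submodule.span A {m}) ≠ ⊤ := by
    rwa [Ne, Ideal.eq_top_iff_one, Submodule.mem_colon_span_singleton, one_smul]
  have := IsLocalRing.of_mul_nonunits_mem hcolon hmul
  refine ⟨IsLocalRing.maximalIdeal A, inferInstance, fun q hq ↦ IsLocalRing.eq_maximalIdeal hq,
    m, hm, ?_⟩
  rw [pow_two, Ideal.mul_le]
  exact fun c hc d hd ↦ hmul c d ((IsLocalRing.mem_maximalIdeal c).mp hc)
    ((IsLocalRing.mem_maximalIdeal d).mp hd)
end

section
/- Let A be a commutative ring, I an ideal of A, and a ∈ A, i ∈ I. The element (a, a+i) of the amalgamated duplication A ⋈ I = {(x, x+j) : x ∈ A, j ∈ I} (a subring of A × A) is a unit of A ⋈ I if and only if both a and a+i are units in A. -/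
/-- The amalgamated duplication `A ⋈ I` as a subring of `A × A`. -/
def amalgDup (A : Type*) [CommRing A] (I : Ideal A) : Subring (A × A) where
  carrier := {x | x.2 - x.1 ∈ I}
  one_mem' := by simp
  zero_mem' := by simp
  add_mem' := fun {x y} hx hy => by
    simpa [add_sub_add_comm] using I.add_mem hx hy
  neg_mem' := fun {x} hx => by
    simpa [neg_sub', sub_eq_add_neg, add_comm] using I.neg_mem hx
  mul_mem' := fun {x y} hx hy => by
    have : (x * y).2 - (x * y).1 = x.2 * (y.2 - y.1) + y.1 * (x.2 - x.1) := by
      simp [Prod.mul_def]; ring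
    rw [Set.mem_setOf_eq, this]
    exact I.add_mem (I.mul_mem_left _ hy) (I.mul_mem_left _ hx)

theorem Units.val_inv_sub_val_inv {A : Type*} [CommRing A] (u v : Aˣ) :
    (↑v⁻¹ - ↑u⁻¹ : A) = ↑u⁻¹ * ↑v⁻¹ * (u - v) := by
  have hu : (↑u⁻¹ * u : A) = 1 := u.inv_mul
  have hv : (↑v⁻¹ * v : A) = 1 := v.inv_mul
  linear_combination (↑u⁻¹ : A) * hv - (↑v⁻¹ : A) * hu

namespace amalgDup

variable {A : Type*} [CommRing A] {I : Ideal A}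

theorem mem_iff {x : A × A} : x ∈ amalgDup A I ↔ x.2 - x.1 ∈ I := Iff.rfl

theorem inv_mem {u v : Aˣ} (h : ((u : A), (v : A)) ∈ amalgDup A I) :
    ((↑u⁻¹ : A), (↑v⁻¹ : A)) ∈ amalgDup A I := by
  rw [mem_iff, Units.val_inv_sub_val_inv, ← neg_sub]
  exact I.mul_mem_left _ (I.neg_mem h)

theorem isUnit_iff {x : amalgDup A I} :
    IsUnit x ↔ IsUnit (x : A × A).1 ∧ IsUnit (x : A × A).2 := by
  refine ⟨fun h => Prod.isUnit_iff.mp (h.map (amalgDup A I).subtype), ?_⟩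
  rintro ⟨⟨u, hu⟩, ⟨v, hv⟩⟩
  obtain ⟨⟨x₁, x₂⟩, hx⟩ := x
  simp only at hu hv
  subst hu hv
  exact IsUnit.of_mul_eq_one ⟨_, inv_mem hx⟩ (Subtype.ext (Prod.ext u.mul_inv v.mul_inv))

end amalgDup

theorem stmt_19 {A : Type*} [CommRing A] (I : Ideal A) (a : A) (i : A)
    (hi : i ∈ I) :
    IsUnit (⟨(a, a + i), by show a + i - a ∈ I; simpa using hi⟩ : amalgDup A I) ↔
      IsUnit a ∧ IsUnit (a + i) :=
  amalgDup.isUnit_iff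
end
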